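/- For the Dynkin quiver of type A_2 with orientation 1 -> 2, every finite-dimensional representation of dimension vector (m,n) decomposes as a direct sum of m_{[1,1]} copies of the indecomposable [1,1], m_{[2,2]} copies of [2,2], and m_{[1,2]} copies of [1,2] with m_{[1,1]} + m_{[1,2]} = m and m_{[2,2]} + m_{[1,2]} = n; and the Rimányi–Weigandt-type identity holds: 1/((q)_m (q)_n) = \sum q^{m_{[1,1]} m_{[2,2]}} / ((q)_{m_{[1,1]}} (q)_{m_{[2,2]}} (q)_{m_{[1,2]}}), where the sum is over all nonnegative m_{[1,1]}, m_{[2,2]}, m_{[1,2]} with m_{[1,1]} + m_{[1,2]} = m and m_{[2,2]} + m_{[1,2]} = n. -/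

import Mathlib

/-!
Choosing complements of `ker M` in `ℂᵐ` and of `range M` in `ℂⁿ` gives bases in which `M` maps
the first `rank M` vectors to the first `rank M` vectors and kills the others; the two
change-of-basis matrices are `P` and `Q`.

For the identity let `t(m, n, j) = q^{(m-j)(n-j)} / ((q)_{m-j} (q)_{n-j} (q)_j)` and
`S(m, n) = ∑ⱼ t(m, n, j)`. Since `q^{j+1} (1 - q^{n-j}) + (1 - q^{j+1}) = 1 - q^{n+1}`, the terms
satisfy `(1 - q^{n+1}) t(m+1, n+1, j+1) = q^{m+1} t(m+1, n, j+1) + t(m, n, j)`, hence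
`(1 - q^{n+1}) S(m+1, n+1) = q^{m+1} S(m+1, n) + S(m, n)`, and by induction on `n`
`S(m, n) = 1/((q)_m (q)_n)` because `q^{m+1} + (1 - q^{m+1}) = 1`. The computation is done in a
field for any `q` that is not a root of unity and transported to `ℚ⟦q⟧` inside Laurent series.
-/

open PowerSeries

/-- The q-Pochhammer symbol `(q;q)_k` as a formal power series in `q`. -/
noncomputable def qPoch (k : ℕ) : PowerSeries ℚ :=
  ∏ i ∈ Finset.range k, (1 - (X : PowerSeries ℚ) ^ (i + 1))

/-- The normal form of a representation of the `A₂` quiver `1 → 2` which is the direct sum of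
`m₁₂` copies of the indecomposable `[1,2] = (ℂ → ℂ, id)` together with copies of
`[1,1] = (ℂ → 0)` and `[2,2] = (0 → ℂ)`: the matrix with `m₁₂` ones on the diagonal. -/
noncomputable def normalForm (m n m12 : ℕ) : Matrix (Fin n) (Fin m) ℂ :=
  Matrix.of fun i j => if (i : ℕ) = (j : ℕ) ∧ (i : ℕ) < m12 then 1 else 0

open Module

namespace LinearMap

variable {K V W : Type*} [DivisionRing K] [AddCommGroup V] [Module K V] [AddCommGroup W]
  [Module K W] [FiniteDimensional K V] [FiniteDimensional K W]

theorem exists_basis_apply_inl_eq_and_apply_inr_eq_zero (f : V →ₗ[K] W) :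
    ∃ (r k u : ℕ) (b : Basis (Fin r ⊕ Fin k) K V) (c : Basis (Fin r ⊕ Fin u) K W),
      (∀ i, f (b (.inl i)) = c (.inl i)) ∧ ∀ i, f (b (.inr i)) = 0 := by
  obtain ⟨C, hC⟩ := (ker f).exists_isCompl
  obtain ⟨D, hD⟩ := (range f).exists_isCompl
  let bC := finBasis K C
  refine ⟨_, _, _, (bC.prod (finBasis K (ker f))).map (C.prodEquivOfIsCompl _ hC.symm),
    ((bC.map (f.kerComplementEquivRange hC.symm)).prod (finBasis K D)).map
      ((range f).prodEquivOfIsCompl D hD), fun i => by simp, fun i => by simp⟩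

end LinearMap

theorem Matrix.exists_isUnit_mul_mul_eq_normalForm {m n : ℕ} (M : Matrix (Fin n) (Fin m) ℂ) :
    ∃ m11 m22 m12 : ℕ, m11 + m12 = m ∧ m22 + m12 = n ∧
      ∃ (P : Matrix (Fin n) (Fin n) ℂ) (Q : Matrix (Fin m) (Fin m) ℂ),
        IsUnit P ∧ IsUnit Q ∧ P * M * Q = normalForm m n m12 := by
  obtain ⟨r, k, u, b, c, hinl, hinr⟩ :=
    M.mulVecLin.exists_basis_apply_inl_eq_and_apply_inr_eq_zero
  have hm : r + k = m := by simpa using (finrank_eq_card_basis b).symm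
  have hn : r + u = n := by simpa using (finrank_eq_card_basis c).symm
  subst hm hn
  let b' := b.reindex finSumFinEquiv
  let c' := c.reindex finSumFinEquiv
  refine ⟨k, u, r, add_comm _ _, add_comm _ _, c'.toMatrix (Pi.basisFun ℂ _),
    (Pi.basisFun ℂ _).toMatrix b',
    @isUnit_of_invertible _ _ _ (c'.invertibleToMatrix (Pi.basisFun ℂ _)),
    @isUnit_of_invertible _ _ _ ((Pi.basisFun ℂ _).invertibleToMatrix b'), ?_⟩
  have hM : LinearMap.toMatrix (Pi.basisFun ℂ _) (Pi.basisFun ℂ _) M.mulVecLin = M := by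
    ext i j
    simp [LinearMap.toMatrix_apply]
  rw [← hM, basis_toMatrix_mul_linearMap_toMatrix_mul_basis_toMatrix]
  ext i j
  induction j using Fin.addCases <;> induction i using Fin.addCases <;>
    simp [LinearMap.toMatrix_apply, b', c', hinl, hinr, normalForm, Finsupp.single_apply,
      Fin.ext_iff, eq_comm] <;>
    omega

open Finset

section QPochhammer

variable {R : Type*} [CommRing R]

def qPochhammer (x : R) (k : ℕ) : R :=
  ∏ i ∈ range k, (1 - x ^ (i + 1))

@[simp]
theorem qPochhammer_zero (x : R) : qPochhammer x 0 = 1 :=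
  prod_range_zero _

theorem qPochhammer_succ (x : R) (k : ℕ) :
    qPochhammer x (k + 1) = qPochhammer x k * (1 - x ^ (k + 1)) :=
  prod_range_succ _ _

theorem map_qPochhammer {S : Type*} [CommRing S] (f : R →+* S) (x : R) (k : ℕ) :
    f (qPochhammer x k) = qPochhammer (f x) k := by
  simp [qPochhammer, map_prod]

end QPochhammer

section A2Identity

variable {F : Type*} [Field F] {x : F}

theorem one_sub_pow_succ_ne_zero (hx : ∀ k, x ^ (k + 1) ≠ 1) (k : ℕ) : 1 - x ^ (k + 1) ≠ 0 :=
  sub_ne_zero.mpr (hx k).symm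

theorem qPochhammer_ne_zero (hx : ∀ k, x ^ (k + 1) ≠ 1) (k : ℕ) : qPochhammer x k ≠ 0 :=
  prod_ne_zero_iff.mpr fun i _ => one_sub_pow_succ_ne_zero hx i

/-- The summand for `m_{[1,2]} = j`, set to zero unless `j ≤ min m n`. -/
noncomputable def a2Term (x : F) (m n j : ℕ) : F :=
  if j ≤ m ∧ j ≤ n then
    x ^ ((m - j) * (n - j)) / (qPochhammer x (m - j) * qPochhammer x (n - j) * qPochhammer x j)
  else 0

theorem a2Term_of_add {m n j a b : ℕ} (hm : a + j = m) (hn : b + j = n) :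
    a2Term x m n j = x ^ (a * b) / (qPochhammer x a * qPochhammer x b * qPochhammer x j) := by
  subst hm hn
  simp [a2Term]

theorem a2Term_of_lt_left {m n j : ℕ} (h : m < j) : a2Term x m n j = 0 :=
  if_neg (by omega)

theorem a2Term_of_lt_right {m n j : ℕ} (h : n < j) : a2Term x m n j = 0 :=
  if_neg (by omega)

theorem a2Term_succ_succ_zero (hx : ∀ k, x ^ (k + 1) ≠ 1) (m n : ℕ) :
    (1 - x ^ (n + 1)) * a2Term x (m + 1) (n + 1) 0 = x ^ (m + 1) * a2Term x (m + 1) n 0 := by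
  simp only [a2Term_of_add (add_zero _) (add_zero _), qPochhammer_succ x n]
  field_simp [qPochhammer_ne_zero hx, one_sub_pow_succ_ne_zero hx n]
  ring

theorem a2Term_succ_succ_succ (hx : ∀ k, x ^ (k + 1) ≠ 1) (m n j : ℕ) :
    (1 - x ^ (n + 1)) * a2Term x (m + 1) (n + 1) (j + 1) =
      x ^ (m + 1) * a2Term x (m + 1) n (j + 1) + a2Term x m n j := by
  have hP := qPochhammer_ne_zero hx
  have hQ := one_sub_pow_succ_ne_zero hx
  rcases lt_or_ge m j with hmj | hjm
  · simp [a2Term_of_lt_left, hmj]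
  rcases lt_or_ge n j with hnj | hjn
  · simp [a2Term_of_lt_right, hnj, Nat.lt_succ_of_lt hnj]
  obtain ⟨a, rfl⟩ := Nat.exists_eq_add_of_le' hjm
  obtain ⟨b, rfl⟩ := Nat.exists_eq_add_of_le' hjn
  have t₀ : a2Term x (a + j) (b + j) j =
      x ^ (a * b) / (qPochhammer x a * qPochhammer x b * qPochhammer x j) :=
    a2Term_of_add rfl rfl
  have t₁ : a2Term x (a + j + 1) (b + j + 1) (j + 1) =
      x ^ (a * b) / (qPochhammer x a * qPochhammer x b * qPochhammer x (j + 1)) :=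
    a2Term_of_add (by omega) (by omega)
  rw [t₀, t₁, qPochhammer_succ x j]
  rcases b with _ | b
  · rw [a2Term_of_lt_right (by omega)]
    field_simp [hP, hQ]
    ring
  · have t₂ : a2Term x (a + j + 1) (b + 1 + j) (j + 1) =
        x ^ (a * b) / (qPochhammer x a * qPochhammer x b * qPochhammer x (j + 1)) :=
      a2Term_of_add (by omega) (by omega)
    rw [t₂, qPochhammer_succ x j, qPochhammer_succ x b]
    field_simp [hP, hQ]
    ring

theorem sum_a2Term_succ_succ (hx : ∀ k, x ^ (k + 1) ≠ 1) (m n : ℕ) :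
    (1 - x ^ (n + 1)) * ∑ j ∈ range (n + 2), a2Term x (m + 1) (n + 1) j =
      x ^ (m + 1) * ∑ j ∈ range (n + 1), a2Term x (m + 1) n j +
        ∑ j ∈ range (n + 1), a2Term x m n j := by
  rw [mul_sum, sum_range_succ', a2Term_succ_succ_zero hx]
  simp only [a2Term_succ_succ_succ hx]
  rw [sum_add_distrib, ← mul_sum, sum_range_succ (fun j => a2Term x (m + 1) n (j + 1)),
    a2Term_of_lt_right (lt_add_one n), add_zero,
    sum_range_succ' (fun j => a2Term x (m + 1) n j) n]
  ring

theorem sum_a2Term_eq_inv (hx : ∀ k, x ^ (k + 1) ≠ 1) (m n : ℕ) :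
    ∑ j ∈ range (n + 1), a2Term x m n j = (qPochhammer x m * qPochhammer x n)⁻¹ := by
  induction n generalizing m with
  | zero => simp [a2Term]
  | succ n ih =>
    cases m with
    | zero =>
      rw [sum_range_succ']
      simp [a2Term]
    | succ m =>
      have h := sum_a2Term_succ_succ hx m n
      rw [ih, ih] at h
      apply mul_left_cancel₀ (one_sub_pow_succ_ne_zero hx n)
      rw [h, qPochhammer_succ x m, qPochhammer_succ x n]
      field_simp [qPochhammer_ne_zero hx, one_sub_pow_succ_ne_zero hx]
      ring

theorem inv_qPochhammer_mul_eq_sum (hx : ∀ k, x ^ (k + 1) ≠ 1) (m n : ℕ) :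
    (qPochhammer x m * qPochhammer x n)⁻¹ =
      ∑ j ∈ range (min m n + 1), x ^ ((m - j) * (n - j)) *
        (qPochhammer x (m - j) * qPochhammer x (n - j) * qPochhammer x j)⁻¹ := by
  have hmin : range (min m n + 1) ⊆ range (n + 1) := range_subset_range.mpr (by omega)
  rw [← sum_a2Term_eq_inv hx, ← sum_subset hmin]
  · refine sum_congr rfl fun j hj => ?_
    rw [a2Term, if_pos (by simp at hj; omega), div_eq_mul_inv]
  · intro j hj hj'
    exact a2Term_of_lt_left (by simp at hj hj'; omega)

end A2Identity

theorem map_inv_of_constantCoeff_ne_zero {k L : Type*} [Field k] [DivisionRing L]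
    (f : k⟦X⟧ →+* L) {φ : k⟦X⟧} (h : constantCoeff φ ≠ 0) : f φ⁻¹ = (f φ)⁻¹ :=
  eq_inv_of_mul_eq_one_left (by rw [← map_mul, PowerSeries.inv_mul_cancel φ h, map_one])

theorem qPoch_eq_qPochhammer (k : ℕ) : qPoch k = qPochhammer X k :=
  rfl

@[simp]
theorem constantCoeff_qPoch (k : ℕ) : constantCoeff (qPoch k) = 1 := by
  simp [qPoch]

theorem inv_qPoch_mul_eq_sum (m n : ℕ) :
    (qPoch m * qPoch n)⁻¹ =
      ∑ j ∈ range (min m n + 1),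
        (X : ℚ⟦X⟧) ^ ((m - j) * (n - j)) * (qPoch (m - j) * qPoch (n - j) * qPoch j)⁻¹ := by
  let ι := HahnSeries.ofPowerSeries ℤ ℚ
  have hι (k : ℕ) : ι (qPoch k) = qPochhammer (ι X) k := by
    rw [qPoch_eq_qPochhammer, map_qPochhammer]
  have hX : ∀ k, ι X ^ (k + 1) ≠ 1 := fun k h => by
    rw [← map_pow, ← map_one ι, HahnSeries.ofPowerSeries_injective.eq_iff] at h
    simpa using congrArg constantCoeff h
  apply HahnSeries.ofPowerSeries_injective (Γ := ℤ)
  rw [map_inv_of_constantCoeff_ne_zero _ (by simp), map_mul, hι, hι,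
    inv_qPochhammer_mul_eq_sum hX, map_sum]
  refine sum_congr rfl fun j _ => ?_
  rw [map_mul, map_pow, map_inv_of_constantCoeff_ne_zero _ (by simp), map_mul, map_mul, hι, hι, hι]

/-- (1) Every finite-dimensional representation of the `A₂` quiver `1 → 2` with dimension
vector `(m, n)` (i.e. a linear map `ℂᵐ → ℂⁿ`, given by a matrix) decomposes as a direct sum
of `m_{[1,1]}` copies of `[1,1]`, `m_{[2,2]}` copies of `[2,2]` and `m_{[1,2]}` copies of
`[1,2]`, with `m_{[1,1]} + m_{[1,2]} = m` and `m_{[2,2]} + m_{[1,2]} = n` — equivalently the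
matrix can be brought into the normal form with `m_{[1,2]}` diagonal ones by base change on
both sides; and (2) the Rimányi–Weigandt-type identity
`1/((q)_m (q)_n) = ∑ q^{m_{[1,1]} m_{[2,2]}} / ((q)_{m_{[1,1]}} (q)_{m_{[2,2]}} (q)_{m_{[1,2]}})`
holds, the sum being over all nonnegative `m_{[1,1]}, m_{[2,2]}, m_{[1,2]}` with
`m_{[1,1]} + m_{[1,2]} = m` and `m_{[2,2]} + m_{[1,2]} = n`. -/
theorem a2_quiver_decomposition_and_identity :
    (∀ (m n : ℕ) (M : Matrix (Fin n) (Fin m) ℂ),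
      ∃ m11 m22 m12 : ℕ, m11 + m12 = m ∧ m22 + m12 = n ∧
        ∃ (P : Matrix (Fin n) (Fin n) ℂ) (Q : Matrix (Fin m) (Fin m) ℂ),
          IsUnit P ∧ IsUnit Q ∧ P * M * Q = normalForm m n m12) ∧
    (∀ m n : ℕ,
      (qPoch m * qPoch n)⁻¹ =
        ∑ j ∈ Finset.range (min m n + 1),
          (X : PowerSeries ℚ) ^ ((m - j) * (n - j)) *
            (qPoch (m - j) * qPoch (n - j) * qPoch j)⁻¹) := by
  exact ⟨fun _ _ M => M.exists_isUnit_mul_mul_eq_normalForm, inv_qPoch_mul_eq_sum⟩
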